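/- Let m, n ≥ 0, let γ ∈ DP(m,n), and suppose the pair (A, B), with A ∈ Mat_{n×m}(ℂ) and B ∈ Mat_{m×n}(ℂ) and B A nilpotent, lies in the (GL_m(ℂ) × GL_n(ℂ))-orbit of the direct sum of the elementary pairs attached to γ. Then for every integer j ≥ 0, rank((B A)^j) = Σ_{(x,y)^ε ∈ γ} max(x − j, 0) and rank((A B)^j) = Σ_{(x,y)^ε ∈ γ} max(y − j, 0), where the sums range over the decorated pairs of γ counted with multiplicity. In particular, the multiset of Jordan block sizes of the nilpotent matrix B A is μ₁†(γ) and that of A B is μ₂†(γ). -/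

import Mathlib

/-!
Both products are computed block by block. For every elementary pair the matrices are truncated
shifts `i ↦ i + d` (`d ∈ {0, 1}`), and shifts compose by adding offsets, so `B A` and `A B` of an
elementary pair of type `(x, y)` are single nilpotent Jordan blocks of sizes `x` and `y`. In the
orbit, `B A` and `A B` are therefore conjugate (by `g₁`, resp. `g₂`) to block-diagonal nilpotent
Jordan matrices whose block sizes are the first, resp. second, coordinates of `γ`; blocks of size
zero are empty and can be dropped. Ranks add over diagonal blocks, and the `j`-th power of a
Jordan block of size `k` is the shift by `j`, of rank `k - j`: for a shift `S`, `Sᴴ S` is a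
diagonal `0/1` matrix with `k - j` ones.
-/

open Matrix
open scoped MatrixGroups

/-- A decorated pair of non-negative integers: `AB j` encodes the pair `(j+1, j)`
(type `(k, k-1)` with `k = j+1`), `BA j` encodes `(j, j+1)` (type `(k-1, k)`),
`P j` encodes `(j+1, j+1)⁺` and `M j` encodes `(j+1, j+1)⁻`. -/
inductive DPair : Type
  | AB : ℕ → DPair
  | BA : ℕ → DPair
  | P : ℕ → DPair
  | M : ℕ → DPair
deriving DecidableEq

namespace DPair

/-- The first coordinate of a decorated pair. -/
def a : DPair → ℕ
  | AB j => j + 1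
  | BA j => j
  | P j => j + 1
  | M j => j + 1

/-- The second coordinate of a decorated pair. -/
def b : DPair → ℕ
  | AB j => j
  | BA j => j + 1
  | P j => j + 1
  | M j => j + 1

end DPair

/-- The `a × b` matrix with `1`s on the main diagonal (entries `(i,i)`) and `0`
elsewhere. -/
def diagOne (a b : ℕ) : Matrix (Fin a) (Fin b) ℂ :=
  fun i j => if (i : ℕ) = (j : ℕ) then 1 else 0

/-- The `a × b` matrix with `1`s on the subdiagonal (entries `(i+1,i)`) and `0`
elsewhere. -/
def subDiag (a b : ℕ) : Matrix (Fin a) (Fin b) ℂ :=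
  fun i j => if (i : ℕ) = (j : ℕ) + 1 then 1 else 0

/-- The first matrix `A` of the elementary pair attached to a decorated pair. -/
def elemA : (p : DPair) → Matrix (Fin p.b) (Fin p.a) ℂ
  | .AB _ => diagOne _ _
  | .BA _ => subDiag _ _
  | .P _ => diagOne _ _
  | .M _ => subDiag _ _

/-- The second matrix `B` of the elementary pair attached to a decorated pair. -/
def elemB : (p : DPair) → Matrix (Fin p.a) (Fin p.b) ℂ
  | .AB _ => subDiag _ _
  | .BA _ => diagOne _ _
  | .P _ => subDiag _ _
  | .M _ => diagOne _ _

/-- Block-diagonal direct sum of two rectangular matrices. -/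
def dsum {b₁ a₁ b₂ a₂ : ℕ} (M₁ : Matrix (Fin b₁) (Fin a₁) ℂ)
    (M₂ : Matrix (Fin b₂) (Fin a₂) ℂ) :
    Matrix (Fin (b₁ + b₂)) (Fin (a₁ + a₂)) ℂ :=
  Matrix.reindex finSumFinEquiv finSumFinEquiv (Matrix.fromBlocks M₁ 0 0 M₂)

/-- The direct sum, over a list of decorated pairs, of the first matrices of the
corresponding elementary pairs. -/
def listA : (l : List DPair) → Matrix (Fin (l.map DPair.b).sum) (Fin (l.map DPair.a).sum) ℂ
  | [] => 0
  | p :: t => dsum (elemA p) (listA t)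

/-- The direct sum, over a list of decorated pairs, of the second matrices of the
corresponding elementary pairs. -/
def listB : (l : List DPair) → Matrix (Fin (l.map DPair.a).sum) (Fin (l.map DPair.b).sum) ℂ
  | [] => 0
  | p :: t => dsum (elemB p) (listB t)

/-- Recasting a matrix along equalities of its dimensions. -/
def castMat {r c r' c' : ℕ} (hr : r = r') (hc : c = c') (M : Matrix (Fin r) (Fin c) ℂ) :
    Matrix (Fin r') (Fin c') ℂ :=
  Matrix.reindex (finCongr hr) (finCongr hc) M

/-- `(A', B')` lies in the `GL_m(ℂ) × GL_n(ℂ)`-orbit of `(A, B)` for the action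
`(g₁, g₂) · (A, B) = (g₂ A g₁⁻¹, g₁ B g₂⁻¹)`. -/
def SameOrbit (m n : ℕ) (A : Matrix (Fin n) (Fin m) ℂ) (B : Matrix (Fin m) (Fin n) ℂ)
    (A' : Matrix (Fin n) (Fin m) ℂ) (B' : Matrix (Fin m) (Fin n) ℂ) : Prop :=
  ∃ (g₁ : GL (Fin m) ℂ) (g₂ : GL (Fin n) ℂ),
    A' = (↑g₂ : Matrix (Fin n) (Fin n) ℂ) * A * (↑(g₁⁻¹) : Matrix (Fin m) (Fin m) ℂ) ∧
    B' = (↑g₁ : Matrix (Fin m) (Fin m) ℂ) * B * (↑(g₂⁻¹) : Matrix (Fin n) (Fin n) ℂ)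

/-- The first component `μ₁†` of the moment map: the multiset of first coordinates,
with zero parts discarded. -/
def muA (γ : Multiset DPair) : Multiset ℕ :=
  (γ.map DPair.a).filter (0 < ·)

/-- The second component `μ₂†` of the moment map. -/
def muB (γ : Multiset DPair) : Multiset ℕ :=
  (γ.map DPair.b).filter (0 < ·)

/-- The block-diagonal nilpotent matrix whose Jordan blocks have the sizes listed
in `l`. -/
def listJordan : (l : List ℕ) → Matrix (Fin l.sum) (Fin l.sum) ℂ
  | [] => 0
  | k :: t => dsum (subDiag k k) (listJordan t)

def Submodule.prodEquivProd {R M N : Type*} [Semiring R] [AddCommMonoid M] [AddCommMonoid N]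
    [Module R M] [Module R N] (P : Submodule R M) (Q : Submodule R N) :
    P.prod Q ≃ₗ[R] P × Q where
  toFun x := (⟨x.1.1, x.2.1⟩, ⟨x.1.2, x.2.2⟩)
  invFun y := ⟨(y.1, y.2), y.1.2, y.2.2⟩
  map_add' _ _ := rfl
  map_smul' _ _ := rfl

lemma Matrix.rank_fromBlocks_zero_zero {K p q : Type*} [Field K] [Fintype p] [Fintype q]
    (M : Matrix p p K) (N : Matrix q q K) :
    (fromBlocks M 0 0 N).rank = M.rank + N.rank := by
  classical
  let b := (Pi.basisFun K p).prod (Pi.basisFun K q)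
  have hblocks : fromBlocks M 0 0 N = LinearMap.toMatrix b b (M.toLin'.prodMap N.toLin') := by
    rw [LinearMap.toMatrix_prodMap, LinearMap.toMatrix_eq_toMatrix',
      LinearMap.toMatrix_eq_toMatrix', LinearMap.toMatrix'_toLin', LinearMap.toMatrix'_toLin']
  rw [hblocks, rank_eq_finrank_range_toLin _ b b, toLin_toMatrix, LinearMap.range_prodMap,
    (Submodule.prodEquivProd _ _).finrank_eq, Module.finrank_prod]
  rfl

lemma castMat_castMat {r c r' c' r'' c'' : ℕ} (hr : r = r') (hc : c = c') (hr' : r' = r'')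
    (hc' : c' = c'') (M : Matrix (Fin r) (Fin c) ℂ) :
    castMat hr' hc' (castMat hr hc M) = castMat (hr.trans hr') (hc.trans hc') M := by
  subst hr hc hr' hc'; rfl

lemma castMat_mul_castMat {r s t r' s' t' : ℕ} (hr : r = r') (hs : s = s') (ht : t = t')
    (M : Matrix (Fin r) (Fin s) ℂ) (N : Matrix (Fin s) (Fin t) ℂ) :
    castMat hr hs M * castMat hs ht N = castMat hr ht (M * N) := by
  subst hr hs ht; rfl

lemma castMat_pow {r r' : ℕ} (h : r = r') (M : Matrix (Fin r) (Fin r) ℂ) (j : ℕ) :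
    castMat h h M ^ j = castMat h h (M ^ j) := by
  subst h; rfl

lemma rank_castMat {r c r' c' : ℕ} (hr : r = r') (hc : c = c') (M : Matrix (Fin r) (Fin c) ℂ) :
    (castMat hr hc M).rank = M.rank := by
  subst hr hc; rfl

lemma dsum_mul_dsum {r₁ s₁ t₁ r₂ s₂ t₂ : ℕ} (M₁ : Matrix (Fin r₁) (Fin s₁) ℂ)
    (N₁ : Matrix (Fin s₁) (Fin t₁) ℂ) (M₂ : Matrix (Fin r₂) (Fin s₂) ℂ)
    (N₂ : Matrix (Fin s₂) (Fin t₂) ℂ) :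
    dsum M₁ M₂ * dsum N₁ N₂ = dsum (M₁ * N₁) (M₂ * N₂) := by
  simp [dsum, submatrix_mul_equiv, fromBlocks_multiply]

lemma dsum_pow {p q : ℕ} (M : Matrix (Fin p) (Fin p) ℂ) (N : Matrix (Fin q) (Fin q) ℂ) (j : ℕ) :
    dsum M N ^ j = dsum (M ^ j) (N ^ j) := by
  induction j with
  | zero => simp [dsum, fromBlocks_one, submatrix_one_equiv]
  | succ j ih => rw [pow_succ, ih, dsum_mul_dsum, ← pow_succ, ← pow_succ]

lemma rank_dsum {p q : ℕ} (M : Matrix (Fin p) (Fin p) ℂ) (N : Matrix (Fin q) (Fin q) ℂ) :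
    (dsum M N).rank = M.rank + N.rank := by
  rw [dsum, rank_reindex, rank_fromBlocks_zero_zero]

lemma dsum_castMat {r₁ c₁ r c r' c' : ℕ} (M : Matrix (Fin r₁) (Fin c₁) ℂ)
    (hr : r = r') (hc : c = c') (N : Matrix (Fin r) (Fin c) ℂ) :
    dsum M (castMat hr hc N) = castMat (by rw [hr]) (by rw [hc]) (dsum M N) := by
  subst hr hc; rfl

lemma dsum_of_fin_zero {r c : ℕ} (M : Matrix (Fin 0) (Fin 0) ℂ) (N : Matrix (Fin r) (Fin c) ℂ) :
    dsum M N = castMat (Nat.zero_add r).symm (Nat.zero_add c).symm N := by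
  ext i k
  rcases hi : finSumFinEquiv.symm i with i | i
  · exact i.elim0
  rcases hk : finSumFinEquiv.symm k with k | k
  · exact k.elim0
  rw [Equiv.symm_apply_eq] at hi hk
  subst hi hk
  simp only [dsum, castMat, reindex_apply, submatrix_apply, Equiv.symm_apply_apply,
    fromBlocks_apply₂₂]
  congr <;> ext <;> simp

def shiftMat (a b d : ℕ) : Matrix (Fin a) (Fin b) ℂ :=
  of fun i c => if (i : ℕ) = c + d then 1 else 0

lemma shiftMat_apply {a b d : ℕ} (i : Fin a) (c : Fin b) :
    shiftMat a b d i c = if (i : ℕ) = c + d then 1 else 0 := rfl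

lemma diagOne_eq_shiftMat (a b : ℕ) : diagOne a b = shiftMat a b 0 := rfl

lemma subDiag_eq_shiftMat (a b : ℕ) : subDiag a b = shiftMat a b 1 := rfl

lemma shiftMat_mul_shiftMat {a b c : ℕ} (d e : ℕ) (h : a ≤ b + d) :
    shiftMat a b d * shiftMat b c e = shiftMat a c (e + d) := by
  ext i k
  simp only [mul_apply, shiftMat_apply]
  rw [Fin.sum_univ_eq_sum_range
    (fun r => (if (i : ℕ) = r + d then (1 : ℂ) else 0) * if r = (k : ℕ) + e then 1 else 0)]
  simp only [mul_ite, mul_one, mul_zero, Finset.sum_ite_eq', Finset.mem_range]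
  have := i.isLt
  split_ifs <;> first | rfl | (exfalso; omega)

lemma shiftMat_pow (k d j : ℕ) : shiftMat k k d ^ j = shiftMat k k (j * d) := by
  induction j with
  | zero => ext i c; simp [shiftMat_apply, one_apply, Fin.ext_iff]
  | succ j ih => rw [pow_succ, ih, shiftMat_mul_shiftMat _ _ (by omega), Nat.succ_mul, add_comm]

lemma conjTranspose_shiftMat_mul_self (k d : ℕ) :
    (shiftMat k k d)ᴴ * shiftMat k k d =
      diagonal fun c : Fin k => if (c : ℕ) + d < k then 1 else 0 := by
  ext c c'
  simp only [mul_apply, shiftMat_apply, conjTranspose_apply]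
  rw [Fin.sum_univ_eq_sum_range
    (fun r => star (if r = (c : ℕ) + d then (1 : ℂ) else 0) * if r = (c' : ℕ) + d then 1 else 0)]
  simp only [apply_ite star, star_one, star_zero, ite_mul, one_mul, zero_mul,
    Finset.sum_ite_eq', Finset.mem_range, diagonal_apply, Fin.ext_iff]
  split_ifs <;> first | rfl | (exfalso; omega)

open scoped ComplexOrder in
lemma rank_shiftMat (k d : ℕ) : (shiftMat k k d).rank = k - d := by
  rw [← rank_conjTranspose_mul_self, conjTranspose_shiftMat_mul_self, rank_diagonal]
  exact Fintype.card_congr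
    { toFun c := ⟨c, Nat.lt_sub_of_add_lt (by simpa using c.2)⟩
      invFun c := ⟨⟨c, c.2.trans_le (Nat.sub_le k d)⟩, by simpa using Nat.add_lt_of_lt_sub c.2⟩
      left_inv _ := rfl
      right_inv _ := rfl } |>.trans (Fintype.card_fin _)

lemma rank_subDiag_pow (k j : ℕ) : (subDiag k k ^ j).rank = k - j := by
  rw [subDiag_eq_shiftMat, shiftMat_pow, mul_one, rank_shiftMat]

lemma elemB_mul_elemA (p : DPair) : elemB p * elemA p = subDiag p.a p.a := by
  cases p <;>
    simp only [elemA, elemB, DPair.a, DPair.b, diagOne_eq_shiftMat, subDiag_eq_shiftMat] <;>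
    exact shiftMat_mul_shiftMat _ _ (by omega)

lemma elemA_mul_elemB (p : DPair) : elemA p * elemB p = subDiag p.b p.b := by
  cases p <;>
    simp only [elemA, elemB, DPair.a, DPair.b, diagOne_eq_shiftMat, subDiag_eq_shiftMat] <;>
    exact shiftMat_mul_shiftMat _ _ (by omega)

lemma listB_mul_listA (l : List DPair) : listB l * listA l = listJordan (l.map DPair.a) := by
  induction l with
  | nil => ext i; exact i.elim0
  | cons p t ih =>
    change dsum (elemB p) (listB t) * dsum (elemA p) (listA t) =
      dsum (subDiag p.a p.a) (listJordan (t.map DPair.a))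
    rw [dsum_mul_dsum, elemB_mul_elemA, ih]

lemma listA_mul_listB (l : List DPair) : listA l * listB l = listJordan (l.map DPair.b) := by
  induction l with
  | nil => ext i; exact i.elim0
  | cons p t ih =>
    change dsum (elemA p) (listA t) * dsum (elemB p) (listB t) =
      dsum (subDiag p.b p.b) (listJordan (t.map DPair.b))
    rw [dsum_mul_dsum, elemA_mul_elemB, ih]

lemma rank_listJordan_pow (L : List ℕ) (j : ℕ) :
    (listJordan L ^ j).rank = (L.map (· - j)).sum := by
  induction L with
  | nil => exact Nat.eq_zero_of_le_zero (rank_le_height _)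
  | cons k t ih =>
    change (dsum (subDiag k k) (listJordan t) ^ j).rank = _
    rw [dsum_pow, rank_dsum, rank_subDiag_pow, ih, List.map_cons, List.sum_cons]

lemma sum_filter_pos (L : List ℕ) : (L.filter (0 < ·)).sum = L.sum := by
  induction L with
  | nil => rfl
  | cons k t ih => by_cases hk : 0 < k <;> simp_all

lemma listJordan_eq_castMat_filter_pos :
    ∀ {L L' : List ℕ}, L' = L.filter (0 < ·) → ∀ h : L'.sum = L.sum,
      listJordan L = castMat h h (listJordan L')
  | [], _, hL, _ => by subst hL; rfl
  | k :: t, L', hL, h => by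
    change dsum (subDiag k k) (listJordan t) = _
    by_cases hk : 0 < k
    · rw [List.filter_cons_of_pos (by simpa using hk)] at hL
      subst hL
      rw [listJordan_eq_castMat_filter_pos rfl (sum_filter_pos t), dsum_castMat]
      rfl
    · obtain rfl : k = 0 := by omega
      rw [List.filter_cons_of_neg (by simp)] at hL
      rw [dsum_of_fin_zero, listJordan_eq_castMat_filter_pos hL (by rw [hL, sum_filter_pos]),
        castMat_castMat]
      rfl

section conjugation

variable {m : ℕ}

lemma conj_mul_conj {n : ℕ} (g₁ : GL (Fin m) ℂ) (g₂ : GL (Fin n) ℂ)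
    (X : Matrix (Fin m) (Fin n) ℂ) (Y : Matrix (Fin n) (Fin m) ℂ) :
    ((g₁ : Matrix (Fin m) (Fin m) ℂ) * X * (↑(g₂⁻¹) : Matrix (Fin n) (Fin n) ℂ)) *
        ((g₂ : Matrix (Fin n) (Fin n) ℂ) * Y * (↑(g₁⁻¹) : Matrix (Fin m) (Fin m) ℂ)) =
      (g₁ : Matrix (Fin m) (Fin m) ℂ) * (X * Y) * (↑(g₁⁻¹) : Matrix (Fin m) (Fin m) ℂ) := by
  simp only [Matrix.mul_assoc]
  rw [← Matrix.mul_assoc (↑(g₂⁻¹) : Matrix (Fin n) (Fin n) ℂ), Units.inv_mul, Matrix.one_mul]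

lemma rank_conj (g : GL (Fin m) ℂ) (X : Matrix (Fin m) (Fin m) ℂ) :
    ((g : Matrix _ _ ℂ) * X * (↑(g⁻¹) : Matrix _ _ ℂ)).rank = X.rank := by
  rw [rank_mul_eq_left_of_isUnit_det _ _ (isUnits_det_units _),
    rank_mul_eq_right_of_isUnit_det _ _ (isUnits_det_units _)]

variable (g : GL (Fin m) ℂ) {L : List ℕ} (h : L.sum = m)

lemma rank_pow_conj_listJordan (j : ℕ) :
    (((g : Matrix _ _ ℂ) * castMat h h (listJordan L) * (↑(g⁻¹) : Matrix _ _ ℂ)) ^ j).rank =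
      (L.map (· - j)).sum := by
  rw [Units.conj_pow, rank_conj, castMat_pow, rank_castMat, rank_listJordan_pow]

lemma exists_conj_eq_listJordan_filter_pos :
    ∃ (lj : List ℕ) (hq : lj.sum = m), (lj : Multiset ℕ) = (L : Multiset ℕ).filter (0 < ·) ∧
      ∃ g' : GL (Fin m) ℂ, (g' : Matrix _ _ ℂ) *
          ((g : Matrix _ _ ℂ) * castMat h h (listJordan L) * (↑(g⁻¹) : Matrix _ _ ℂ)) *
          (↑(g'⁻¹) : Matrix _ _ ℂ) = castMat hq hq (listJordan lj) := by
  refine ⟨L.filter (0 < ·), (sum_filter_pos L).trans h, by simp, g⁻¹, ?_⟩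
  rw [listJordan_eq_castMat_filter_pos rfl (sum_filter_pos L), castMat_castMat]
  simp only [inv_inv, Matrix.mul_assoc, Units.inv_mul_cancel_left, Units.inv_mul, Matrix.mul_one]

end conjugation

/-- If `(A, B)` lies in the orbit of the direct sum of the elementary pairs attached to
`γ ∈ DP(m,n)`, then `rank((BA)^j) = ∑_{(x,y)^ε ∈ γ} max(x - j, 0)` and
`rank((AB)^j) = ∑_{(x,y)^ε ∈ γ} max(y - j, 0)`; in particular the multiset of Jordan
block sizes of `B A` is `μ₁†(γ)` and that of `A B` is `μ₂†(γ)`. -/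
theorem rank_pow_of_sameOrbit_dirSum (m n : ℕ) (l : List DPair)
    (ha : (l.map DPair.a).sum = m) (hb : (l.map DPair.b).sum = n)
    (A : Matrix (Fin n) (Fin m) ℂ) (B : Matrix (Fin m) (Fin n) ℂ)
    (horb : SameOrbit m n (castMat hb ha (listA l)) (castMat ha hb (listB l)) A B) :
    (∀ j : ℕ, ((B * A) ^ j).rank = (l.map fun p => p.a - j).sum) ∧
    (∀ j : ℕ, ((A * B) ^ j).rank = (l.map fun p => p.b - j).sum) ∧
    (∃ (lj : List ℕ) (hq : lj.sum = m),
      (lj : Multiset ℕ) = muA (l : Multiset DPair) ∧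
      ∃ g : GL (Fin m) ℂ,
        (↑g : Matrix (Fin m) (Fin m) ℂ) * (B * A) * (↑(g⁻¹) : Matrix (Fin m) (Fin m) ℂ) =
          castMat hq hq (listJordan lj)) ∧
    (∃ (lj : List ℕ) (hq : lj.sum = n),
      (lj : Multiset ℕ) = muB (l : Multiset DPair) ∧
      ∃ g : GL (Fin n) ℂ,
        (↑g : Matrix (Fin n) (Fin n) ℂ) * (A * B) * (↑(g⁻¹) : Matrix (Fin n) (Fin n) ℂ) =
          castMat hq hq (listJordan lj)) := by
  obtain ⟨g₁, g₂, rfl, rfl⟩ := horb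
  rw [conj_mul_conj, conj_mul_conj, castMat_mul_castMat, castMat_mul_castMat, listB_mul_listA,
    listA_mul_listB]
  refine ⟨fun j => ?_, fun j => ?_, ?_, ?_⟩
  · rw [rank_pow_conj_listJordan, List.map_map]; rfl
  · rw [rank_pow_conj_listJordan, List.map_map]; rfl
  · simpa [muA] using exists_conj_eq_listJordan_filter_pos g₁ ha
  · simpa [muB] using exists_conj_eq_listJordan_filter_pos g₂ hb
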